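/- arXiv:2001.02931 — 3 statements merged into one kernel-verified Lean document; each statement's English description precedes it below -/
import Mathlib

section
/- Let S be a set of sorts, A an S-sorted set, and k ∈ ℕ₊. For any Q ⊆ Rp(A), the minor-closure satisfies ⟨Q⟩ = ⟨((⟨Q⟩)↑)↓⟩, where ↑ is lifting of relation pairs (of arity divisible by k) from A to A^k and ↓ is flattening from A^k to A. -/
/-!
Framework for multisorted minions and relation pairs, following
Lehtonen–Pöschel–Waldhauser.

* An `S`-sorted set is modelled as a family `A : S → Type*` (components may be empty).
* `MOp S A` is the type of `S`-sorted operations on `A` (with declaration `(arity, sort)`).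
* `RelPair S A` is the type of `S`-sorted relation pairs on `A`.
* `SortedReflection S A B` models a reflection `(h, h')` of `A` into `B`:
  `h_s : B_s → A_s` and `h'_s : A_s → B_s`, the latter only required for sorts `s`
  with `B_s ≠ ∅` (for sorts with `B_s` empty a map `B_s → A_s` exists trivially,
  so this encoding is faithful to components being indexed by essential sorts of `B`).
-/

universe u u' v w

variable {S : Type w}

/-- A multisorted operation on an `S`-sorted set `A`, with declaration
`(arity, sort)` (the word `w = s_1 … s_n` is modelled as `arity : Fin n → S`). -/
structure MOp (S : Type w) (A : S → Type u) where
  n : ℕ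
  arity : Fin n → S
  sort : S
  fn : (∀ i, A (arity i)) → A sort

/-- The minor `f^u_σ` of a multisorted operation `f`, for a word `u : Fin m → S` and a
sort-compatible map `σ`. -/
def MOp.minor {A : S → Type u} (f : MOp S A) {m : ℕ} (u : Fin m → S)
    (σ : Fin f.n → Fin m) (h : ∀ i, u (σ i) = f.arity i) : MOp S A where
  n := m
  arity := u
  sort := f.sort
  fn := fun a => f.fn fun i => cast (congrArg A (h i)) (a (σ i))

/-- A minion: a minor-closed set of multisorted operations. -/
def IsMinion {A : S → Type u} (F : Set (MOp S A)) : Prop :=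
  ∀ f ∈ F, ∀ (m : ℕ) (u : Fin m → S) (σ : Fin f.n → Fin m)
    (h : ∀ i, u (σ i) = f.arity i), f.minor u σ h ∈ F

/-- An `S`-sorted relation pair on `A`: a pair `(R, R')` of `m`-ary `S`-sorted
relations on `A` (an `m`-ary relation is a family of sets of `m`-tuples, one for
each sort). -/
structure RelPair (S : Type w) (A : S → Type u) where
  m : ℕ
  R : ∀ s, Set (Fin m → A s)
  R' : ∀ s, Set (Fin m → A s)

/-- `f` preserves the relation pair `p = (R, R')`: applying `f` row-wise to a matrix
whose columns (at the respective input sorts) lie in `R` produces a column in `R'`. -/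
def MOp.Preserves {A : S → Type u} (f : MOp S A) (p : RelPair S A) : Prop :=
  ∀ a : ∀ i, Fin p.m → A (f.arity i),
    (∀ i, a i ∈ p.R (f.arity i)) →
    (fun j => f.fn fun i => a i j) ∈ p.R' f.sort

/-- Multisorted polymorphisms of a set of relation pairs. -/
def mPol {A : S → Type u} (Q : Set (RelPair S A)) : Set (MOp S A) :=
  {f | ∀ p ∈ Q, f.Preserves p}

/-- Invariant relation pairs of a set of multisorted operations. -/
def mInv {A : S → Type u} (F : Set (MOp S A)) : Set (RelPair S A) :=
  {p | ∀ f ∈ F, f.Preserves p}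

/-- `p` is a relaxation of `q`: same arity, `p.R ⊆ q.R` and `p.R' ⊇ q.R'`. -/
def RelPair.Relaxation {A : S → Type u} (p q : RelPair S A) : Prop :=
  ∃ hm : p.m = q.m,
    (∀ s, ∀ x ∈ p.R s, (fun j => x (Fin.cast hm.symm j)) ∈ q.R s) ∧
    (∀ s, ∀ x ∈ q.R' s, (fun j => x (Fin.cast hm j)) ∈ p.R' s)

/-- The set of all relaxations of members of `Q`. -/
def Relax {A : S → Type u} (Q : Set (RelPair S A)) : Set (RelPair S A) :=
  {p | ∃ q ∈ Q, p.Relaxation q}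

/-- The diagonal relation pair `(δ^m_ρ, δ^m_ρ)` for an equivalence relation `ρ` on
`{1, …, m}`. -/
def diagPair (A : S → Type u) (m : ℕ) (ρ : Setoid (Fin m)) : RelPair S A :=
  ⟨m, fun _ => {x | ∀ i j, ρ.r i j → x i = x j},
      fun _ => {x | ∀ i j, ρ.r i j → x i = x j}⟩

/-- Permutation of coordinates of a relation pair.  (The elementary operations `ζ`
(cyclic shift) and `τ` (transposition of the first two coordinates) generate all
coordinate permutations, so closure under `ζ` and `τ` is the same as closure under
all coordinate permutations.) -/
def RelPair.permute {A : S → Type u} (p : RelPair S A) (e : Equiv.Perm (Fin p.m)) :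
    RelPair S A :=
  ⟨p.m, fun s => {x | (fun j => x (e j)) ∈ p.R s},
        fun s => {x | (fun j => x (e j)) ∈ p.R' s}⟩

/-- The elementary operation `pr`: deletion of the first coordinate. -/
def RelPair.proj {A : S → Type u} (p : RelPair S A) : RelPair S A :=
  ⟨p.m - 1,
   fun s => {x | ∃ y ∈ p.R s, ∀ j : Fin (p.m - 1),
     x j = y ⟨j.val + 1, by have := j.isLt; omega⟩},
   fun s => {x | ∃ y ∈ p.R' s, ∀ j : Fin (p.m - 1),
     x j = y ⟨j.val + 1, by have := j.isLt; omega⟩}⟩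

/-- The elementary operation `×`: direct product of relation pairs. -/
def RelPair.prod {A : S → Type u} (p q : RelPair S A) : RelPair S A :=
  ⟨p.m + q.m,
   fun s => {x | (fun j => x (Fin.castAdd q.m j)) ∈ p.R s ∧
                 (fun j => x (Fin.natAdd p.m j)) ∈ q.R s},
   fun s => {x | (fun j => x (Fin.castAdd q.m j)) ∈ p.R' s ∧
                 (fun j => x (Fin.natAdd p.m j)) ∈ q.R' s}⟩

/-- The elementary operation `∧`: intersection of two relation pairs of equal arity. -/
def RelPair.interPair {A : S → Type u} (p q : RelPair S A) (hm : p.m = q.m) :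
    RelPair S A :=
  ⟨p.m,
   fun s => {x | x ∈ p.R s ∧ (fun j => x (Fin.cast hm.symm j)) ∈ q.R s},
   fun s => {x | x ∈ p.R' s ∧ (fun j => x (Fin.cast hm.symm j)) ∈ q.R' s}⟩

/-- Intersection of an arbitrary family of relation pairs of common arity `m`. -/
def interFamily {A : S → Type u} (m : ℕ) (T : Set (RelPair S A)) : RelPair S A :=
  ⟨m,
   fun s => {x | ∀ p ∈ T, ∀ hm : m = p.m, (fun j => x (Fin.cast hm.symm j)) ∈ p.R s},
   fun s => {x | ∀ p ∈ T, ∀ hm : m = p.m, (fun j => x (Fin.cast hm.symm j)) ∈ p.R' s}⟩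

/-- A set of relation pairs is minor-closed if it contains all diagonal relation pairs
and is closed under coordinate permutations (equivalently, under `ζ` and `τ`),
deletion of a coordinate, direct products, intersections of pairs of equal arity,
relaxations, and arbitrary intersections. -/
def IsMinorClosed {A : S → Type u} (Q : Set (RelPair S A)) : Prop :=
  (∀ (m : ℕ) (ρ : Setoid (Fin m)), diagPair A m ρ ∈ Q) ∧
  (∀ p ∈ Q, ∀ e : Equiv.Perm (Fin p.m), p.permute e ∈ Q) ∧
  (∀ p ∈ Q, p.proj ∈ Q) ∧
  (∀ p ∈ Q, ∀ q ∈ Q, p.prod q ∈ Q) ∧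
  (∀ p ∈ Q, ∀ q ∈ Q, ∀ hm : p.m = q.m, p.interPair q hm ∈ Q) ∧
  (∀ q ∈ Q, ∀ p : RelPair S A, p.Relaxation q → p ∈ Q) ∧
  (∀ (m : ℕ) (T : Set (RelPair S A)), T ⊆ Q → (∀ p ∈ T, p.m = m) →
    interFamily m T ∈ Q)

/-- The minor-closure `⟨Q⟩` of a set of relation pairs: the least minor-closed set
containing `Q`. -/
def minorClosure {A : S → Type u} (Q : Set (RelPair S A)) : Set (RelPair S A) :=
  ⋂₀ {T | IsMinorClosed T ∧ Q ⊆ T}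

/-- A reflection `(h, h')` of `A` into `B`: maps `h_s : B_s → A_s` and
`h'_s : A_s → B_s`, the latter given for the sorts `s` with `B_s` nonempty. -/
structure SortedReflection (S : Type w) (A : S → Type u) (B : S → Type u') where
  h : ∀ s, B s → A s
  h' : ∀ s, Nonempty (B s) → A s → B s

/-- The declaration of `f` is reasonable in `B`: if `B_w ≠ ∅` then `B_s ≠ ∅`. -/
def Reasonable {A : S → Type u} (B : S → Type u') (f : MOp S A) : Prop :=
  (∀ i, Nonempty (B (f.arity i))) → Nonempty (B f.sort)

/-- The `(h,h')`-reflection `f_{(h,h')}` of an operation `f` whose declaration is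
reasonable in `B`.  (If `B_w = ∅` then the domain is empty and this is the empty map.) -/
def MOp.reflect {A : S → Type u} {B : S → Type u'} (f : MOp S A)
    (r : SortedReflection S A B) (hf : Reasonable B f) : MOp S B where
  n := f.n
  arity := f.arity
  sort := f.sort
  fn := fun b => r.h' f.sort (hf fun i => ⟨b i⟩) (f.fn fun i => r.h (f.arity i) (b i))

/-- The `(h,h')`-reflection `F_{(h,h')}` of a set of operations. -/
def reflectOps {A : S → Type u} {B : S → Type u'} (r : SortedReflection S A B)
    (F : Set (MOp S A)) : Set (MOp S B) :=
  {g | ∃ f ∈ F, ∃ hf : Reasonable B f, g = f.reflect r hf}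

/-- The `(h,h')`-reflection `(R,R')_{(h,h')} = (h⁻¹(R), h'(R'))` of a relation pair,
with components `∅` at the sorts `s` with `B_s = ∅`. -/
def RelPair.reflect {A : S → Type u} {B : S → Type u'} (p : RelPair S A)
    (r : SortedReflection S A B) : RelPair S B :=
  ⟨p.m,
   fun s => {x | Nonempty (B s) ∧ (fun j => r.h s (x j)) ∈ p.R s},
   fun s => {x | ∃ hs : Nonempty (B s), ∃ y ∈ p.R' s, x = fun j => r.h' s hs (y j)}⟩

/-- The `(h,h')`-coreflection `(T,T')^{(h,h')} = (h(T), h'⁻¹(T'))` of a relation pair,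
with components `∅` at the sorts `s` with `B_s = ∅`. -/
def RelPair.coreflect {A : S → Type u} {B : S → Type u'} (q : RelPair S B)
    (r : SortedReflection S A B) : RelPair S A :=
  ⟨q.m,
   fun s => {x | Nonempty (B s) ∧ ∃ y ∈ q.R s, x = fun j => r.h s (y j)},
   fun s => {x | ∃ hs : Nonempty (B s), (fun j => r.h' s hs (x j)) ∈ q.R' s}⟩

/-- Elementwise reflection `Q_{(h,h')}` of a set of relation pairs on `A`. -/
def reflectPairs {A : S → Type u} {B : S → Type u'} (r : SortedReflection S A B)
    (Q : Set (RelPair S A)) : Set (RelPair S B) :=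
  (fun p => p.reflect r) '' Q

/-- Elementwise coreflection `Q^{(h,h')}` of a set of relation pairs on `B`. -/
def coreflectPairs {A : S → Type u} {B : S → Type u'} (r : SortedReflection S A B)
    (Q : Set (RelPair S B)) : Set (RelPair S A) :=
  (fun q => q.coreflect r) '' Q

/-- The direct power `f^{⊗I}` of an operation, acting componentwise on `A^I`. -/
def MOp.pow {A : S → Type u} (f : MOp S A) (I : Type v) :
    MOp S (fun s => I → A s) where
  n := f.n
  arity := f.arity
  sort := f.sort
  fn := fun a i => f.fn fun j => a j i

/-- The direct power `F^{⊗I}` of a set of operations. -/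
def powOps {A : S → Type u} (F : Set (MOp S A)) (I : Type v) :
    Set (MOp S (fun s => I → A s)) :=
  {g | ∃ f ∈ F, g = f.pow I}

/-- Index of the `j`-th entry of the `i`-th block of length `k`. -/
def blockIdx {n k : ℕ} (i : Fin n) (j : Fin k) : Fin (n * k) :=
  ⟨i.val * k + j.val, by
    have hi := i.isLt
    have hj := j.isLt
    calc i.val * k + j.val < i.val * k + k := by omega
      _ = (i.val + 1) * k := by ring
      _ ≤ n * k := Nat.mul_le_mul_right k hi⟩

/-- The flattening `(T,T')↓` of a relation pair on `A^k`: an `n`-ary pair on `A^k`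
becomes an `nk`-ary pair on `A`, grouping coordinates in consecutive blocks of
length `k`. -/
def RelPair.flatten {A : S → Type u} {k : ℕ} (q : RelPair S (fun s => Fin k → A s)) :
    RelPair S A :=
  ⟨q.m * k,
   fun s => {x | (fun i j => x (blockIdx i j)) ∈ q.R s},
   fun s => {x | (fun i j => x (blockIdx i j)) ∈ q.R' s}⟩

/-- Elementwise flattening `T↓` of a set of relation pairs on `A^k`. -/
def flattenPairs {A : S → Type u} {k : ℕ}
    (T : Set (RelPair S (fun s => Fin k → A s))) : Set (RelPair S A) :=
  RelPair.flatten '' T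

/-- The lifting `Q↑` of a set of relation pairs on `A`: the set of all liftings of
members of `Q` whose arity is divisible by `k`.  (For `k ≥ 1`, flattening is a
bijection from relation pairs on `A^k` onto relation pairs on `A` of arity divisible
by `k`, and lifting is its inverse; hence `Q↑ = {q : q↓ ∈ Q}`.) -/
def liftPairs {A : S → Type u} (k : ℕ) (Q : Set (RelPair S A)) :
    Set (RelPair S (fun s => Fin k → A s)) :=
  {q | q.flatten ∈ Q}

/-- A minion homomorphism `λ : M1 → M2`: declaration-preserving and compatible with
the formation of minors. -/
structure MinionHom {A : S → Type u} {B : S → Type u'}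
    (M1 : Set (MOp S A)) (M2 : Set (MOp S B)) where
  toFun : ∀ f ∈ M1, MOp S B
  mem : ∀ f hf, toFun f hf ∈ M2
  decl_n : ∀ f hf, (toFun f hf).n = f.n
  decl_arity : ∀ f hf i, (toFun f hf).arity i = f.arity (Fin.cast (decl_n f hf) i)
  decl_sort : ∀ f hf, (toFun f hf).sort = f.sort
  map_minor : ∀ f hf, ∀ {m : ℕ} (u : Fin m → S) (σ : Fin f.n → Fin m)
      (h : ∀ i, u (σ i) = f.arity i) (hmem : f.minor u σ h ∈ M1),
      toFun (f.minor u σ h) hmem =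
        (toFun f hf).minor u (fun i => σ (Fin.cast (decl_n f hf) i))
          (fun i => (h (Fin.cast (decl_n f hf) i)).trans (decl_arity f hf i).symm)

section MinorClosureAux

variable {A : S → Type u}

/-- Kernel setoid of a map (with definitionally transparent relation). -/
def kerSetoid {α : Type*} {β : Type*} (f : α → β) : Setoid α :=
  ⟨fun a b => f a = f b, ⟨fun _ => rfl, Eq.symm, Eq.trans⟩⟩

lemma subset_minorClosure (Q : Set (RelPair S A)) : Q ⊆ minorClosure Q :=
  fun _p hp => Set.mem_sInter.2 fun _T hT => hT.2 hp

lemma minorClosure_isMinorClosed (Q : Set (RelPair S A)) :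
    IsMinorClosed (minorClosure Q) :=
  ⟨fun m ρ => Set.mem_sInter.2 fun T hT => hT.1.1 m ρ,
    fun p hp e => Set.mem_sInter.2 fun T hT => hT.1.2.1 p (Set.mem_sInter.1 hp T hT) e,
    fun p hp => Set.mem_sInter.2 fun T hT => hT.1.2.2.1 p (Set.mem_sInter.1 hp T hT),
    fun p hp q hq => Set.mem_sInter.2 fun T hT =>
      hT.1.2.2.2.1 p (Set.mem_sInter.1 hp T hT) q (Set.mem_sInter.1 hq T hT),
    fun p hp q hq hm => Set.mem_sInter.2 fun T hT =>
      hT.1.2.2.2.2.1 p (Set.mem_sInter.1 hp T hT) q (Set.mem_sInter.1 hq T hT) hm,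
    fun q hq p hrel => Set.mem_sInter.2 fun T hT =>
      hT.1.2.2.2.2.2.1 q (Set.mem_sInter.1 hq T hT) p hrel,
    fun m T' hsub hm => Set.mem_sInter.2 fun T hT =>
      hT.1.2.2.2.2.2.2 m T' (fun p hp => Set.mem_sInter.1 (hsub hp) T hT) hm⟩

/-- If a pair `p` with `p.m + t = V.m` is (up to relaxation) obtained from `V ∈ T`
by deleting the first `t` coordinates, then `p ∈ T` for minor-closed `T`. -/
lemma mem_of_proj_iter {T : Set (RelPair S A)} (hT : IsMinorClosed T) :
    ∀ (t : ℕ) (V : RelPair S A), V ∈ T → ∀ p : RelPair S A, ∀ _hm : p.m + t = V.m,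
    (∀ s, ∀ x ∈ p.R s, ∃ y ∈ V.R s, ∀ j : Fin p.m,
      x j = y ⟨j.val + t, by have := j.isLt; omega⟩) →
    (∀ s, ∀ y ∈ V.R' s,
      (fun j : Fin p.m => y ⟨j.val + t, by have := j.isLt; omega⟩) ∈ p.R' s) →
    p ∈ T := by
  intro t
  induction t with
  | zero =>
    intro V hV p hm hR hR'
    have hm' : p.m = V.m := by omega
    refine hT.2.2.2.2.2.1 V hV p ⟨hm', ?_, ?_⟩
    · intro s x hx
      obtain ⟨y, hy, hxy⟩ := hR s x hx
      have hfe : (fun j => x (Fin.cast hm'.symm j)) = y := by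
        funext j
        rw [hxy (Fin.cast hm'.symm j)]
        exact congrArg y (Fin.ext (by simp))
      rw [hfe]; exact hy
    · intro s x hx
      have h := hR' s x hx
      have hfe : (fun j : Fin p.m => x ⟨j.val + 0, by have := j.isLt; omega⟩)
          = fun j => x (Fin.cast hm' j) := by
        funext j
        exact congrArg x (Fin.ext (by simp))
      exact Set.mem_of_eq_of_mem hfe.symm h
  | succ t IH =>
    intro V hV p hm hR hR'
    have hpm : V.proj.m = V.m - 1 := rfl
    refine IH V.proj (hT.2.2.1 V hV) p (by omega) ?_ ?_
    · intro s x hx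
      obtain ⟨y, hy, hxy⟩ := hR s x hx
      refine ⟨fun j => y ⟨j.val + 1, by have := j.isLt; omega⟩, ⟨y, hy, fun j => rfl⟩, ?_⟩
      intro j
      rw [hxy j]
      exact congrArg y (Fin.ext (by simp [Nat.add_assoc]))
    · intro s y' hy'
      obtain ⟨w, hw, hyw⟩ := hy'
      have h := hR' s w hw
      have hfe : (fun j : Fin p.m => w ⟨j.val + (t + 1), by have := j.isLt; omega⟩)
          = fun j : Fin p.m => y' ⟨j.val + t, by have := j.isLt; omega⟩ := by
        funext j
        refine Eq.trans ?_ (hyw ⟨j.val + t, by have := j.isLt; omega⟩).symm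
        exact congrArg w (Fin.ext (by simp [Nat.add_assoc]))
      exact Set.mem_of_eq_of_mem hfe.symm h

/-- The padding map `Fin (M + m) → Fin M` determined by `φ`. -/
def padMap (M m : ℕ) (φ : Fin m → Fin M) : Fin (M + m) → Fin M :=
  fun v => if h : v.val < M then ⟨v.val, h⟩ else φ ⟨v.val - M, by have := v.isLt; omega⟩

lemma padMap_castAdd {M m : ℕ} (φ : Fin m → Fin M) (j : Fin M) :
    padMap M m φ (Fin.castAdd m j) = j := by
  simp only [padMap]
  rw [dif_pos (show (Fin.castAdd m j).val < M from j.isLt)]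
  rfl

/-- Master lemma: membership in a minor-closed set via a coordinate-selection map. -/
lemma mem_of_coords {T : Set (RelPair S A)} (hT : IsMinorClosed T)
    (V : RelPair S A) (hV : V ∈ T) (p : RelPair S A) (φ : Fin p.m → Fin V.m)
    (hR : ∀ s, ∀ x ∈ p.R s, ∃ z ∈ V.R s, ∀ i, z (φ i) = x i)
    (hR' : ∀ s, ∀ w ∈ V.R' s, (fun i => w (φ i)) ∈ p.R' s) : p ∈ T := by
  have hgNat : ∀ (j : Fin p.m) (h : j.val + V.m < V.m + p.m),
      padMap V.m p.m φ ⟨j.val + V.m, h⟩ = φ j := by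
    intro j h
    simp only [padMap]
    rw [dif_neg (by omega)]
    exact congrArg φ (Fin.ext (by simp))
  have hdiag1 : diagPair A p.m (kerSetoid (id : Fin p.m → Fin p.m)) ∈ T := hT.1 _ _
  have hdiag2 : diagPair A (V.m + p.m) (kerSetoid (padMap V.m p.m φ)) ∈ T := hT.1 _ _
  have hprod : V.prod (diagPair A p.m (kerSetoid id)) ∈ T := hT.2.2.2.1 V hV _ hdiag1
  have hW : (V.prod (diagPair A p.m (kerSetoid id))).interPair
      (diagPair A (V.m + p.m) (kerSetoid (padMap V.m p.m φ))) rfl ∈ T :=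
    hT.2.2.2.2.1 _ hprod _ hdiag2 rfl
  refine mem_of_proj_iter hT V.m _ hW p (Nat.add_comm p.m V.m) ?_ ?_
  · intro s x hx
    obtain ⟨z, hz, hzx⟩ := hR s x hx
    refine ⟨fun v => z (padMap V.m p.m φ v), ⟨⟨?_, ?_⟩, ?_⟩, ?_⟩
    · have hfe : (fun j => z (padMap V.m p.m φ (Fin.castAdd p.m j))) = z :=
        funext fun j => congrArg z (padMap_castAdd φ j)
      exact Set.mem_of_eq_of_mem hfe hz
    · intro i j hij
      exact congrArg z (congrArg (padMap V.m p.m φ) (congrArg (Fin.natAdd V.m) (hij : i = j)))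
    · intro i j hij
      exact congrArg z (hij : _ = _)
    · intro j
      show x j = z (padMap V.m p.m φ
        ⟨j.val + V.m, by show (j : ℕ) + V.m < V.m + p.m; have := j.isLt; omega⟩)
      rw [hgNat j]
      exact (hzx j).symm
  · intro s y hy
    obtain ⟨⟨h1, _h2⟩, h3⟩ := hy
    have key : ∀ (j : Fin p.m) (h : j.val + V.m < V.m + p.m),
        y ⟨j.val + V.m, h⟩ = y (Fin.castAdd p.m (φ j)) := by
      intro j h
      exact h3 ⟨j.val + V.m, h⟩ (Fin.castAdd p.m (φ j))
        ((hgNat j h).trans (padMap_castAdd φ (φ j)).symm)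
    have hfe : (fun i => (fun j => y (Fin.castAdd p.m j)) (φ i))
        = fun j : Fin p.m => y
          ⟨j.val + V.m, by show (j : ℕ) + V.m < V.m + p.m; have := j.isLt; omega⟩ := by
      funext j
      exact (key j (by have := j.isLt; omega)).symm
    exact Set.mem_of_eq_of_mem hfe.symm (hR' s _ h1)

/-- Concatenation of two tuples. -/
def padTuple {α : Sort*} {m n : ℕ} (f : Fin m → α) (g : Fin n → α) : Fin (m + n) → α :=
  fun v => if h : v.val < m then f ⟨v.val, h⟩ else g ⟨v.val - m, by have := v.isLt; omega⟩

lemma padTuple_castAdd {α : Sort*} {m n : ℕ} (f : Fin m → α) (g : Fin n → α) (j : Fin m) :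
    padTuple f g (Fin.castAdd n j) = f j := by
  simp only [padTuple]
  rw [dif_pos (show (Fin.castAdd n j).val < m from j.isLt)]
  exact congrArg f (Fin.ext (by simp))

lemma padTuple_natAdd {α : Sort*} {m n : ℕ} (f : Fin m → α) (g : Fin n → α) (j : Fin n) :
    padTuple f g (Fin.natAdd m j) = g j := by
  simp only [padTuple]
  rw [dif_neg (show ¬ ((Fin.natAdd m j).val < m) by show ¬ (m + (j : ℕ) < m); omega)]
  exact congrArg g (Fin.ext (by show m + (j : ℕ) - m = (j : ℕ); omega))

/-- Selection map for lifting: block starts go to the `V`-part, the rest to padding. -/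
def liftSelect (m k : ℕ) (hk : 0 < k) : Fin (m * k) → Fin (m + m * k) := fun v =>
  if h : v.val % k = 0 then
    Fin.castAdd (m * k) ⟨v.val / k, (Nat.div_lt_iff_lt_mul hk).mpr v.isLt⟩
  else Fin.natAdd m v

lemma liftSelect_mod {m k : ℕ} (hk : 0 < k) (v : Fin (m * k)) (h : v.val % k = 0) :
    liftSelect m k hk v
      = Fin.castAdd (m * k) ⟨v.val / k, (Nat.div_lt_iff_lt_mul hk).mpr v.isLt⟩ :=
  dif_pos h

lemma liftSelect_nmod {m k : ℕ} (hk : 0 < k) (v : Fin (m * k)) (h : ¬ v.val % k = 0) :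
    liftSelect m k hk v = Fin.natAdd m v :=
  dif_neg h

lemma liftSelect_blockIdx {m k : ℕ} (hk : 0 < k) (i : Fin m) :
    liftSelect m k hk (blockIdx i ⟨0, hk⟩) = Fin.castAdd (m * k) i := by
  have h0 : (blockIdx i (⟨0, hk⟩ : Fin k)).val % k = 0 := by
    show (i.val * k + 0) % k = 0
    simp
  rw [liftSelect_mod hk _ h0]
  refine congrArg _ (Fin.ext ?_)
  show (i.val * k + 0) / k = i.val
  rw [Nat.add_zero, Nat.mul_div_cancel _ hk]

/-- Block quotient map `Fin (m * k) → Fin m`. -/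
def blockDiv (m k : ℕ) (hk : 0 < k) : Fin (m * k) → Fin m := fun v =>
  ⟨v.val / k, (Nat.div_lt_iff_lt_mul hk).mpr v.isLt⟩

lemma blockDiv_blockIdx0 {m k : ℕ} (hk : 0 < k) (i : Fin m) :
    blockDiv m k hk (blockIdx i ⟨0, hk⟩) = i := by
  refine Fin.ext ?_
  show (i.val * k + 0) / k = i.val
  rw [Nat.add_zero, Nat.mul_div_cancel _ hk]

end MinorClosureAux

/-- For any `Q ⊆ Rp(A)` and `k ∈ ℕ₊`,
`⟨Q⟩ = ⟨((⟨Q⟩)↑)↓⟩`, where `↑` is lifting (w.r.t. `k`) and `↓` is flattening. -/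
theorem minorClosure_flatten_lift {S : Type w} {A : S → Type u} (k : ℕ) (hk : 0 < k)
    (Q : Set (RelPair S A)) :
    minorClosure Q = minorClosure (flattenPairs (liftPairs k (minorClosure Q))) := by
  have hC : IsMinorClosed (minorClosure Q) := minorClosure_isMinorClosed Q
  refine Set.Subset.antisymm ?_ ?_
  · intro p hp
    set D := flattenPairs (liftPairs k (minorClosure Q)) with hD
    set q : RelPair S (fun s => Fin k → A s) :=
      ⟨p.m, fun s => {y | (fun i => y i ⟨0, hk⟩) ∈ p.R s},
            fun s => {y | (fun i => y i ⟨0, hk⟩) ∈ p.R' s}⟩ with hq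
    have hQF : q.flatten ∈ minorClosure Q := by
      refine mem_of_coords hC
        (p.prod (diagPair A (p.m * k) (kerSetoid (id : Fin (p.m * k) → Fin (p.m * k)))))
        (hC.2.2.2.1 p hp _ (hC.1 _ _)) q.flatten (liftSelect p.m k hk) ?_ ?_
      · intro s x hx
        have hx' : (fun i => x (blockIdx i ⟨0, hk⟩)) ∈ p.R s := hx
        refine ⟨padTuple (fun i : Fin p.m => x (blockIdx i ⟨0, hk⟩)) x, ⟨?_, ?_⟩, ?_⟩
        · have hfe : (fun j : Fin p.m =>
              padTuple (fun i : Fin p.m => x (blockIdx i ⟨0, hk⟩)) x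
                (Fin.castAdd (p.m * k) j))
              = fun i : Fin p.m => x (blockIdx i ⟨0, hk⟩) :=
            funext fun j => padTuple_castAdd _ _ j
          exact Set.mem_of_eq_of_mem hfe hx'
        · intro i j hij
          exact congrArg (fun t => padTuple (fun i : Fin p.m => x (blockIdx i ⟨0, hk⟩)) x
            (Fin.natAdd p.m t)) (hij : i = j)
        · intro v
          show padTuple (fun i : Fin p.m => x (blockIdx i ⟨0, hk⟩)) x
            (liftSelect p.m k hk v) = x v
          by_cases h : (v : ℕ) % k = 0
          · rw [liftSelect_mod (m := p.m) hk v h]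
            refine (padTuple_castAdd _ _ _).trans (congrArg x (Fin.ext ?_))
            show (v : ℕ) / k * k + 0 = (v : ℕ)
            rw [Nat.add_zero, Nat.div_mul_cancel (Nat.dvd_of_mod_eq_zero h)]
          · rw [liftSelect_nmod (m := p.m) hk v h]
            exact padTuple_natAdd _ _ v
      · intro s w hw
        obtain ⟨h1, _⟩ := hw
        have hfe : (fun i : Fin p.m => w (liftSelect p.m k hk (blockIdx i ⟨0, hk⟩)))
            = fun j : Fin p.m => w (Fin.castAdd (p.m * k) j) :=
          funext fun i => congrArg w (liftSelect_blockIdx hk i)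
        show (fun i : Fin p.m => w (liftSelect p.m k hk (blockIdx i ⟨0, hk⟩))) ∈ p.R' s
        exact Set.mem_of_eq_of_mem hfe h1
    have hDmem : q.flatten ∈ D := ⟨q, hQF, rfl⟩
    refine mem_of_coords (minorClosure_isMinorClosed D) q.flatten
      (subset_minorClosure D hDmem) p (fun i => blockIdx i ⟨0, hk⟩) ?_ ?_
    · intro s x hx
      refine ⟨fun v => x (blockDiv p.m k hk v), ?_, ?_⟩
      · have hfe : (fun i : Fin p.m => x (blockDiv p.m k hk (blockIdx i ⟨0, hk⟩))) = x :=
          funext fun i => congrArg x (blockDiv_blockIdx0 hk i)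
        show (fun i : Fin p.m => x (blockDiv p.m k hk (blockIdx i ⟨0, hk⟩))) ∈ p.R s
        exact Set.mem_of_eq_of_mem hfe hx
      · intro i
        exact congrArg x (blockDiv_blockIdx0 hk i)
    · intro s w hw
      exact hw
  · refine Set.sInter_subset_of_mem ⟨hC, ?_⟩
    rintro r ⟨q', hq', rfl⟩
    exact hq'
end

section
/- Let S be a set of sorts, A an S-sorted set, and k ∈ ℕ₊. For any f ∈ Op(A) and any relation pair (T,T') ∈ Rp(A^k), the direct power f^⊗k preserves (T,T') if and only if f preserves the flattening (T,T')↓. -/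
/-!
Framework for multisorted minions and relation pairs, following
Lehtonen–Pöschel–Waldhauser.

* An `S`-sorted set is modelled as a family `A : S → Type*` (components may be empty).
* `MOp S A` is the type of `S`-sorted operations on `A` (with declaration `(arity, sort)`).
* `RelPair S A` is the type of `S`-sorted relation pairs on `A`.
* `SortedReflection S A B` models a reflection `(h, h')` of `A` into `B`:
  `h_s : B_s → A_s` and `h'_s : A_s → B_s`, the latter only required for sorts `s`
  with `B_s ≠ ∅` (for sorts with `B_s` empty a map `B_s → A_s` exists trivially,
  so this encoding is faithful to components being indexed by essential sorts of `B`).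
-/

universe u u' v w

variable {S : Type w}

/-- For any `f ∈ Op(A)` and any relation pair `(T,T') ∈ Rp(A^k)`
(`k ∈ ℕ₊`), the direct power `f^{⊗k}` preserves `(T,T')` iff `f` preserves the
flattening `(T,T')↓`. -/
theorem pow_preserves_iff_preserves_flatten {S : Type w} {A : S → Type u}
    (k : ℕ) (hk : 0 < k) (f : MOp S A) (p : RelPair S (fun s => Fin k → A s)) :
    (f.pow (Fin k)).Preserves p ↔ f.Preserves p.flatten := by
  constructor
  · intro H a ha
    exact H (fun i j j' => a i (blockIdx j j')) ha
  · intro H b hb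
    have hdiv : ∀ m : Fin (p.m * k), m.val / k < p.m := fun m =>
      (Nat.div_lt_iff_lt_mul hk).2 m.isLt
    have hmod : ∀ m : Fin (p.m * k), m.val % k < k := fun m => Nat.mod_lt _ hk
    have hd : ∀ {n : ℕ} (j : Fin n) (j' : Fin k) (h : (blockIdx j j').val / k < n),
        (⟨(blockIdx j j').val / k, h⟩ : Fin n) = j := by
      intro n j j' h
      ext
      show (j.val * k + j'.val) / k = j.val
      rw [Nat.mul_comm, Nat.mul_add_div hk, Nat.div_eq_of_lt j'.isLt, Nat.add_zero]
    have hm' : ∀ {n : ℕ} (j : Fin n) (j' : Fin k) (h : (blockIdx j j').val % k < k),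
        (⟨(blockIdx j j').val % k, h⟩ : Fin k) = j' := by
      intro n j j' h
      ext
      show (j.val * k + j'.val) % k = j'.val
      rw [Nat.mul_comm, Nat.mul_add_mod, Nat.mod_eq_of_lt j'.isLt]
    have key := H (fun i m => b i ⟨m.val / k, hdiv m⟩ ⟨m.val % k, hmod m⟩) ?_
    · have e : (fun (j : Fin p.m) (j' : Fin k) => f.fn fun i =>
          b i ⟨(blockIdx j j').val / k, hdiv _⟩ ⟨(blockIdx j j').val % k, hmod _⟩)
          = fun j j' => f.fn fun i => b i j j' := by
        funext j j'
        congr 1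
        funext i
        rw [hd j j', hm' j j']
      have key' : (fun (j : Fin p.m) (j' : Fin k) => f.fn fun i =>
          b i ⟨(blockIdx j j').val / k, hdiv _⟩ ⟨(blockIdx j j').val % k, hmod _⟩)
          ∈ p.R' f.sort := key
      rw [e] at key'
      exact key'
    · intro i
      have e : (fun (j : Fin p.m) (j' : Fin k) => b i ⟨(blockIdx j j').val / k, hdiv _⟩
          ⟨(blockIdx j j').val % k, hmod _⟩) = b i := by
        funext j j'
        rw [hd j j', hm' j j']
      have hbi : b i ∈ p.R (f.arity i) := hb i
      rw [← e] at hbi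
      exact hbi
end

section
/- Let S be a set of sorts and let A, B be S-sorted sets. Assume the set S_B := {s ∈ S : B_s ≠ ∅} is finite, all components A_s and B_s for s ∈ S_B are finite, and S_B ⊆ {s : A_s ≠ ∅}. Let M1 ⊆ Op(A) and M2 ⊆ Op(B) be arbitrary sets of operations (not necessarily minions). Then M2 ∈ R Pfin M1 (M2 is a reflection of a finite direct power of M1) if and only if M2 ∈ R P M1 (M2 is a reflection of a direct power of M1 over an arbitrary index set). -/
/-!
Framework for multisorted minions and relation pairs, following
Lehtonen–Pöschel–Waldhauser.

* An `S`-sorted set is modelled as a family `A : S → Type*` (components may be empty).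
* `MOp S A` is the type of `S`-sorted operations on `A` (with declaration `(arity, sort)`).
* `RelPair S A` is the type of `S`-sorted relation pairs on `A`.
* `SortedReflection S A B` models a reflection `(h, h')` of `A` into `B`:
  `h_s : B_s → A_s` and `h'_s : A_s → B_s`, the latter only required for sorts `s`
  with `B_s ≠ ∅` (for sorts with `B_s` empty a map `B_s → A_s` exists trivially,
  so this encoding is faithful to components being indexed by essential sorts of `B`).
-/

universe u u' v w

variable {S : Type w}

/-- Transport a reflection along a pair of index maps `c : J → I`, `q : I → J`. -/
def SortedReflection.transport {S : Type w} {A : S → Type u} {B : S → Type u'}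
    {I : Type*} {J : Type*} (r : SortedReflection S (fun s => I → A s) B)
    (c : J → I) (q : I → J) : SortedReflection S (fun s => J → A s) B where
  h := fun s b j => r.h s b (c j)
  h' := fun s hs x => r.h' s hs (fun i => x (q i))

lemma reflect_pow_transport {S : Type w} {A : S → Type u} {B : S → Type u'}
    (f : MOp S A) {I : Type*} {J : Type*}
    (r : SortedReflection S (fun s => I → A s) B)
    (c : J → I) (q : I → J)
    (compat : ∀ s (b : B s) (i : I), r.h s b (c (q i)) = r.h s b i)
    (hf : Reasonable B (f.pow I)) (hf' : Reasonable B (f.pow J)) :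
    (f.pow J).reflect (r.transport c q) hf' = (f.pow I).reflect r hf := by
  show MOp.mk f.n f.arity f.sort _ = MOp.mk f.n f.arity f.sort _
  congr 1
  funext b
  show r.h' f.sort _ (fun i => f.fn fun t => r.h (f.arity t) (b t) (c (q i)))
     = r.h' f.sort _ (fun i => f.fn fun t => r.h (f.arity t) (b t) i)
  congr 1
  funext i
  congr 1
  funext t
  exact compat _ _ _

/-- Let `A`, `B` be `S`-sorted sets such that the set of essential
sorts of `B` is finite, all components `A_s`, `B_s` for essential sorts `s` of `B`
are finite, and every essential sort of `B` is essential in `A`.  For arbitrary sets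
`M1 ⊆ Op(A)`, `M2 ⊆ Op(B)`: `M2 ∈ R Pfin M1` iff `M2 ∈ R P M1`. -/
theorem RPfin_iff_RP {S : Type w} {A : S → Type u} {B : S → Type u'}
    (hSB : {s | Nonempty (B s)}.Finite)
    (hfin : ∀ s, Nonempty (B s) → (Finite (A s) ∧ Finite (B s)))
    (hBA : ∀ s, Nonempty (B s) → Nonempty (A s))
    (M1 : Set (MOp S A)) (M2 : Set (MOp S B)) :
    (∃ (k : ℕ) (r : SortedReflection S (fun s => Fin k → A s) B),
        (∀ g ∈ powOps M1 (Fin k), Reasonable B g) ∧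
        M2 = reflectOps r (powOps M1 (Fin k)))
    ↔ (∃ (I : Type v) (r : SortedReflection S (fun s => I → A s) B),
        (∀ g ∈ powOps M1 I, Reasonable B g) ∧
        M2 = reflectOps r (powOps M1 I)) := by
  constructor
  · rintro ⟨k, r, hreas, hM2⟩
    refine ⟨ULift.{v} (Fin k), r.transport (fun i => i.down) (fun j => ⟨j⟩),
      fun g hg => ?_, ?_⟩
    · obtain ⟨f, hf, rfl⟩ := hg
      exact (hreas (f.pow (Fin k)) ⟨f, hf, rfl⟩ : Reasonable B (f.pow (Fin k)))
    · rw [hM2]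
      ext g
      constructor
      · rintro ⟨p, ⟨f, hf1, rfl⟩, hfr, rfl⟩
        refine ⟨f.pow (ULift.{v} (Fin k)), ⟨f, hf1, rfl⟩,
          (hfr : Reasonable B (f.pow (Fin k))), ?_⟩
        exact (reflect_pow_transport f r _ _ (fun s b i => rfl) hfr _).symm
      · rintro ⟨p, ⟨f, hf1, rfl⟩, hfr, rfl⟩
        refine ⟨f.pow (Fin k), ⟨f, hf1, rfl⟩,
          (hfr : Reasonable B (f.pow (ULift.{v} (Fin k)))), ?_⟩
        exact reflect_pow_transport f r _ _ (fun s b i => rfl) _ hfr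
  · rintro ⟨I, r, hreas, hM2⟩
    -- the finite target of the coding map
    have hS : Finite {s // Nonempty (B s)} := hSB.to_subtype
    have hA : ∀ d : Σ s : {s // Nonempty (B s)}, B s.val, Finite (A d.1.val) :=
      fun d => (hfin d.1.val d.1.2).1
    have hB : ∀ s : {s // Nonempty (B s)}, Finite (B s.val) :=
      fun s => (hfin s.val s.2).2
    haveI := hS
    haveI : ∀ s : {s // Nonempty (B s)}, Finite (B s.val) := hB
    haveI : ∀ d : Σ s : {s // Nonempty (B s)}, B s.val, Finite (A d.1.val) := hA
    set Φ : I → ∀ d : Σ s : {s // Nonempty (B s)}, B s.val, A d.1.val :=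
      fun i d => r.h d.1.val d.2 i with hΦ
    haveI : Finite (∀ d : Σ s : {s // Nonempty (B s)}, B s.val, A d.1.val) :=
      Pi.finite
    have hrange : (Set.range Φ).Finite := Set.toFinite _
    haveI := hrange.fintype
    set k := Fintype.card (Set.range Φ) with hk
    set e : (Set.range Φ) ≃ Fin k := Fintype.equivFin _ with he
    set c : Fin k → I := fun j => (e.symm j).2.choose with hc
    set q : I → Fin k := fun i => e ⟨Φ i, Set.mem_range_self i⟩ with hq
    have compat : ∀ s (b : B s) (i : I), r.h s b (c (q i)) = r.h s b i := by
      intro s b i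
      have h1 : Φ (c (q i)) = (e.symm (q i)).val := (e.symm (q i)).2.choose_spec
      have h2 : (e.symm (q i)).val = Φ i := by rw [hq]; rw [Equiv.symm_apply_apply]
      have := h1.trans h2
      exact congrFun this ⟨⟨s, ⟨b⟩⟩, b⟩
    refine ⟨k, r.transport c q, fun g hg => ?_, ?_⟩
    · obtain ⟨f, hf, rfl⟩ := hg
      exact (hreas (f.pow I) ⟨f, hf, rfl⟩ : Reasonable B (f.pow I))
    · rw [hM2]
      ext g
      constructor
      · rintro ⟨p, ⟨f, hf1, rfl⟩, hfr, rfl⟩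
        refine ⟨f.pow (Fin k), ⟨f, hf1, rfl⟩, (hfr : Reasonable B (f.pow I)), ?_⟩
        exact (reflect_pow_transport f r c q compat hfr _).symm
      · rintro ⟨p, ⟨f, hf1, rfl⟩, hfr, rfl⟩
        refine ⟨f.pow I, ⟨f, hf1, rfl⟩, (hfr : Reasonable B (f.pow (Fin k))), ?_⟩
        exact reflect_pow_transport f r c q compat _ hfr
end
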